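/- arXiv:1002.2331 — 5 statements merged into one kernel-verified Lean document; each statement's English description precedes it below -/
import Mathlib

section
/- Let p be a prime and define a_p(n) = ⌊n/(p−1)⌋ + v_p(⌊n/(p−1)⌋!). Then for all natural numbers m and n with n ≥ 1, one has a_p(m + n) ≥ a_p(m + 1) + v_p(n!). -/
/-- `a p n = ⌊n/(p−1)⌋ + v_p(⌊n/(p−1)⌋!)`, where `⌊·⌋` is natural division. -/
def apFun (p n : ℕ) : ℕ :=
  n / (p - 1) + padicValNat p (Nat.factorial (n / (p - 1)))

/-!
Write `q = p - 1`, `j = (m + 1) / q`, `d = (n - 1) / q` and `k = (m + n) / q`, so that `j + d ≤ k`.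
Legendre's formula gives `v_p(n!) ≤ (n - 1) / q = d`, and `j ≤ k` gives `v_p(j!) ≤ v_p(k!)`;
adding `j + d ≤ k` yields `a_p(m + 1) + v_p(n!) ≤ a_p(m + n)`.
-/

open Nat

section

variable (p : ℕ) [Fact p.Prime]

theorem padicValNat_le_of_dvd {a b : ℕ} (hb : b ≠ 0) (h : a ∣ b) :
    padicValNat p a ≤ padicValNat p b :=
  (padicValNat_dvd_iff_le hb).mp (pow_padicValNat_dvd.trans h)

theorem padicValNat_factorial_le_of_le {a b : ℕ} (h : a ≤ b) :
    padicValNat p a ! ≤ padicValNat p b ! :=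
  padicValNat_le_of_dvd p (factorial_ne_zero b) (factorial_dvd_factorial h)

theorem padicValNat_factorial_le_sub_one_div {n : ℕ} (hn : n ≠ 0) :
    padicValNat p n ! ≤ (n - 1) / (p - 1) := by
  have hp : 0 < p - 1 := Nat.sub_pos_of_lt (Fact.out : p.Prime).one_lt
  rw [Nat.le_div_iff_mul_le hp, mul_comm]
  have := sub_one_mul_padicValNat_factorial_lt_of_ne_zero p hn
  omega

end

theorem apFun_add_ge (p : ℕ) (hp : p.Prime) (m n : ℕ) (hn : n ≥ 1) :
    apFun p (m + n) ≥ apFun p (m + 1) + padicValNat p (Nat.factorial n) := by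
  have : Fact p.Prime := ⟨hp⟩
  have hsplit : (m + 1) / (p - 1) + (n - 1) / (p - 1) ≤ (m + n) / (p - 1) := by
    simpa [show m + 1 + (n - 1) = m + n by omega] using
      Nat.div_add_div_le_add_div (x := m + 1) (y := n - 1) (z := p - 1)
  have hfac := padicValNat_factorial_le_of_le p (le_of_add_le_left hsplit)
  have hlegendre := padicValNat_factorial_le_sub_one_div p (n := n) (by omega)
  unfold apFun
  omega
end

section
/- Let p be a prime and define b_p(n) = ⌊p·n/(p−1)² − 1/(p−1)⌋ (an integer). Then for all natural numbers k and l, one has b_p(k + l) ≥ b_p(k) + b_p(l). -/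
/-- `b p n = ⌊p·n/(p−1)² − 1/(p−1)⌋`, the floor of a rational number, as an integer. -/
def bpFun (p n : ℕ) : ℤ :=
  ⌊(p : ℚ) * n / ((p : ℚ) - 1) ^ 2 - 1 / ((p : ℚ) - 1)⌋

theorem bpFun_superadditive (p : ℕ) (hp : p.Prime) (k l : ℕ) :
    bpFun p (k + l) ≥ bpFun p k + bpFun p l := by
  have hp2 : (2 : ℚ) ≤ (p : ℚ) := by exact_mod_cast hp.two_le
  have hpos : (0 : ℚ) < (p : ℚ) - 1 := by linarith
  have hc : (0 : ℚ) ≤ 1 / ((p : ℚ) - 1) := by positivity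
  set X : ℚ := (p : ℚ) * k / ((p : ℚ) - 1) ^ 2 - 1 / ((p : ℚ) - 1) with hX
  set Y : ℚ := (p : ℚ) * l / ((p : ℚ) - 1) ^ 2 - 1 / ((p : ℚ) - 1) with hY
  have h1 : bpFun p k + bpFun p l ≤ ⌊X + Y⌋ := by
    apply Int.le_floor.mpr
    push_cast
    exact add_le_add (Int.floor_le X) (Int.floor_le Y)
  have h2 : ⌊X + Y⌋ ≤ bpFun p (k + l) := by
    apply Int.floor_mono
    have : (p : ℚ) * (k + l : ℕ) / ((p : ℚ) - 1) ^ 2 - 1 / ((p : ℚ) - 1)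
        = X + Y + 1 / ((p : ℚ) - 1) := by
      rw [hX, hY]; push_cast; ring
    rw [this]
    linarith
  exact le_trans h1 h2
end

section
/- Let p ≥ 3 be a prime and define b_p(n) = ⌊p·n/(p−1)² − 1/(p−1)⌋ (an integer). Then for all natural numbers k and l, one has b_p(k + l) ≥ b_p(k) + v_p(l!). -/
theorem bpFun_add_natCast_le {p k l m : ℕ} (h : (m : ℚ) ≤ p * l / ((p : ℚ) - 1) ^ 2) :
    bpFun p k + m ≤ bpFun p (k + l) := by
  have hshift : (p : ℚ) * (k + l : ℕ) / ((p : ℚ) - 1) ^ 2 - 1 / ((p : ℚ) - 1) =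
      ((p : ℚ) * k / ((p : ℚ) - 1) ^ 2 - 1 / ((p : ℚ) - 1)) + p * l / ((p : ℚ) - 1) ^ 2 := by
    push_cast; ring
  rw [bpFun, bpFun, hshift, ← Int.floor_add_natCast]
  exact Int.floor_le_floor (by linarith)

theorem sub_one_mul_padicValNat_factorial_le (p : ℕ) [Fact p.Prime] (n : ℕ) :
    (p - 1) * padicValNat p n.factorial ≤ n :=
  sub_one_mul_padicValNat_factorial (p := p) n ▸ Nat.sub_le _ _

theorem natCast_le_mul_div_sub_one_sq {p v n : ℕ} (hp : 1 < p) (h : (p - 1) * v ≤ n) :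
    (v : ℚ) ≤ p * n / ((p : ℚ) - 1) ^ 2 := by
  have hp' : (1 : ℚ) < p := by exact_mod_cast hp
  have hq : ((p : ℚ) - 1) * v ≤ n := by
    have := (Nat.cast_le (α := ℚ)).mpr h
    rwa [Nat.cast_mul, Nat.cast_sub hp.le, Nat.cast_one] at this
  rw [le_div_iff₀ (by nlinarith)]
  nlinarith [v.cast_nonneg (α := ℚ)]

theorem bpFun_add_ge_valFactorial_general (p : ℕ) (hp : p.Prime) (k l : ℕ) :
    bpFun p (k + l) ≥ bpFun p k + (padicValNat p (Nat.factorial l) : ℤ) := by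
  have : Fact p.Prime := ⟨hp⟩
  exact bpFun_add_natCast_le <|
    natCast_le_mul_div_sub_one_sq hp.one_lt (sub_one_mul_padicValNat_factorial_le p l)

theorem bpFun_add_ge_valFactorial (p : ℕ) (hp : p.Prime) (hp3 : p ≥ 3) (k l : ℕ) :
    bpFun p (k + l) ≥ bpFun p k + (padicValNat p (Nat.factorial l) : ℤ) :=
  bpFun_add_ge_valFactorial_general p hp k l
end

section
/- Define D(n) = ∏_{p prime, p ≤ n+1} p^{b_p(n)}, where b_p(n) = ⌊p·n/(p−1)² − 1/(p−1)⌋. Then for all natural numbers k and l, the product D(k)·2^l·l! divides D(k + l). -/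
/-- `D n = ∏_{p prime, p ≤ n+1} p^{b_p(n)}`. Since `b_p(n) ≥ 1` for `p ≤ n+1`, using
`Int.toNat` on the exponent does not change the value. -/
def DFun (n : ℕ) : ℕ :=
  ∏ p ∈ (Finset.range (n + 2)).filter Nat.Prime, p ^ (bpFun p n).toNat

/-- Legendre with digit sum: `(p-1) * v_p(l!) + 1 ≤ l` for `l ≥ 1`. -/
lemma legendre_bound {p : ℕ} (hp : p.Prime) {l : ℕ} (hl : l ≠ 0) :
    (p - 1) * (Nat.factorial l).factorization p + 1 ≤ l := by
  haveI : Fact p.Prime := ⟨hp⟩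
  rw [Nat.factorization_def _ hp]
  have h := sub_one_mul_padicValNat_factorial (p := p) l
  have hle : (p.digits l).sum ≤ l := Nat.digit_sum_le p l
  have hpos : 1 ≤ (p.digits l).sum := by
    have hne : p.digits l ≠ [] := Nat.digits_ne_nil_iff_ne_zero.mpr hl
    have hlast := Nat.getLast_digit_ne_zero p hl
    have hmem : (p.digits l).getLast hne ∈ p.digits l := List.getLast_mem hne
    calc 1 ≤ (p.digits l).getLast hne := Nat.one_le_iff_ne_zero.mpr hlast
      _ ≤ (p.digits l).sum := List.single_le_sum (fun x _ => Nat.zero_le x) _ hmem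
  omega

lemma bp_two (n : ℕ) : bpFun 2 n = 2 * n - 1 := by
  unfold bpFun
  have : ((2 : ℕ) : ℚ) * n / (((2 : ℕ) : ℚ) - 1) ^ 2 - 1 / (((2 : ℕ) : ℚ) - 1)
      = ((2 * (n : ℤ) - 1 : ℤ) : ℚ) := by push_cast; ring
  rw [this, Int.floor_intCast]

lemma bp_nonpos {p k : ℕ} (hp2 : 2 ≤ p) (hk : k + 2 ≤ p) : bpFun p k ≤ 0 := by
  have h1 : (1 : ℚ) < p := by exact_mod_cast hp2
  have hc : (0 : ℚ) < (p : ℚ) - 1 := by linarith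
  have hc2 : (0 : ℚ) < ((p : ℚ) - 1) ^ 2 := pow_pos hc 2
  have hkq : (k : ℚ) + 2 ≤ p := by exact_mod_cast hk
  have hlt : bpFun p k < 1 := by
    unfold bpFun
    rw [Int.floor_lt]
    push_cast
    rw [sub_lt_iff_lt_add, div_lt_iff₀ hc2]
    have hexp : (1 + 1 / ((p : ℚ) - 1)) * ((p : ℚ) - 1) ^ 2
        = ((p : ℚ) - 1) ^ 2 + ((p : ℚ) - 1) := by field_simp
    rw [hexp]
    nlinarith [mul_le_mul_of_nonneg_left (by linarith : (k : ℚ) ≤ (p : ℚ) - 2)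
      (by positivity : (0 : ℚ) ≤ (p : ℚ))]
  omega

/-- The key per-prime exponent inequality. -/
lemma key_ineq {p : ℕ} (hp : p.Prime) (k l : ℕ) :
    (bpFun p k).toNat + (if p = 2 then l else 0) + (Nat.factorial l).factorization p
      ≤ (bpFun p (k + l)).toNat := by
  rcases Nat.eq_zero_or_pos l with rfl | hl
  · simp [Nat.factorial]
  have hl0 : l ≠ 0 := Nat.pos_iff_ne_zero.mp hl
  set v := (Nat.factorial l).factorization p with hv
  have hv1 : (p - 1) * v + 1 ≤ l := legendre_bound hp hl0
  have hp2 : 2 ≤ p := hp.two_le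
  by_cases hp2' : p = 2
  · subst hp2'
    rw [bp_two, bp_two]
    rw [if_pos rfl]
    omega
  · rw [if_neg hp2', add_zero]
    have h1 : (1 : ℚ) < p := by exact_mod_cast hp2
    have hc : (0 : ℚ) < (p : ℚ) - 1 := by linarith
    have hc2 : (0 : ℚ) < ((p : ℚ) - 1) ^ 2 := pow_pos hc 2
    have hcast : ((p - 1 : ℕ) : ℚ) = (p : ℚ) - 1 := by
      push_cast [Nat.cast_sub (by omega : 1 ≤ p)]; ring
    have hv1q : ((p : ℚ) - 1) * v + 1 ≤ l := by
      have := (Nat.cast_le (α := ℚ)).mpr hv1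
      push_cast [hcast] at this
      linarith
    have hl0q : (0 : ℚ) ≤ l := Nat.cast_nonneg l
    have hq : (v : ℚ) * ((p : ℚ) - 1) ^ 2 + ((p : ℚ) - 1) ≤ (p : ℚ) * l := by
      nlinarith [mul_le_mul_of_nonneg_right hv1q hc.le]
    -- (b) : v ≤ bpFun p (k + l)
    have hb : (v : ℤ) ≤ bpFun p (k + l) := by
      unfold bpFun
      rw [Int.le_floor]
      push_cast
      have hsplit : (p : ℚ) * ((k : ℚ) + (l : ℚ)) / ((p : ℚ) - 1) ^ 2 - 1 / ((p : ℚ) - 1)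
          = ((p : ℚ) * ((k : ℚ) + (l : ℚ)) - ((p : ℚ) - 1)) / ((p : ℚ) - 1) ^ 2 := by
        field_simp
      rw [hsplit, le_div_iff₀ hc2]
      nlinarith [mul_nonneg (by positivity : (0 : ℚ) ≤ (p : ℚ))
        (Nat.cast_nonneg (α := ℚ) k)]
    -- (a) : bpFun p k + v ≤ bpFun p (k + l)
    have ha : bpFun p k + (v : ℤ) ≤ bpFun p (k + l) := by
      have hfl : (bpFun p k : ℚ) ≤ (p : ℚ) * k / ((p : ℚ) - 1) ^ 2 - 1 / ((p : ℚ) - 1) :=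
        Int.floor_le _
      have hvle : (v : ℚ) ≤ (p : ℚ) * l / ((p : ℚ) - 1) ^ 2 := by
        rw [le_div_iff₀ hc2]; nlinarith
      unfold bpFun
      rw [Int.le_floor]
      push_cast
      have hsplit : (p : ℚ) * ((k : ℚ) + (l : ℚ)) / ((p : ℚ) - 1) ^ 2 - 1 / ((p : ℚ) - 1)
          = ((p : ℚ) * k / ((p : ℚ) - 1) ^ 2 - 1 / ((p : ℚ) - 1))
            + (p : ℚ) * l / ((p : ℚ) - 1) ^ 2 := by ring
      rw [hsplit]
      exact add_le_add hfl hvle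
    omega

theorem DFun_mul_pow_factorial_dvd (k l : ℕ) :
    DFun k * 2 ^ l * Nat.factorial l ∣ DFun (k + l) := by
  classical
  have h1 : DFun k = ∏ p ∈ (Finset.range (k + l + 2)).filter Nat.Prime,
      p ^ (bpFun p k).toNat := by
    rw [DFun]
    apply Finset.prod_subset
    · exact Finset.filter_subset_filter _ (Finset.range_subset_range.mpr (by omega))
    · intro p hps hpk
      simp only [Finset.mem_filter, Finset.mem_range] at hps hpk
      have hp : p.Prime := hps.2
      have hge : k + 2 ≤ p := by
        by_contra h
        exact hpk ⟨by omega, hp⟩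
      rw [Int.toNat_eq_zero.mpr (bp_nonpos hp.two_le hge), pow_zero]
  have h2 : 2 ^ l = ∏ p ∈ (Finset.range (k + l + 2)).filter Nat.Prime,
      p ^ (if p = 2 then l else 0) := by
    rcases Nat.eq_zero_or_pos l with rfl | hl
    · simp
    · rw [Finset.prod_eq_single 2]
      · simp
      · intro p _ hne
        simp [hne]
      · intro h2s
        exact absurd (Finset.mem_filter.mpr
          ⟨Finset.mem_range.mpr (by omega), Nat.prime_two⟩) h2s
  have h3 : Nat.factorial l = ∏ p ∈ (Finset.range (k + l + 2)).filter Nat.Prime,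
      p ^ ((Nat.factorial l).factorization p) := by
    conv_lhs => rw [← Nat.factorization_prod_pow_eq_self (Nat.factorial_ne_zero l)]
    apply Finsupp.prod_of_support_subset
    · intro p hps
      rw [Nat.support_factorization, Nat.mem_primeFactors] at hps
      obtain ⟨hp, hdvd, -⟩ := hps
      have hle : p ≤ l := (Nat.Prime.dvd_factorial hp).mp hdvd
      exact Finset.mem_filter.mpr ⟨Finset.mem_range.mpr (by omega), hp⟩
    · intro p _
      exact pow_zero p
  rw [h1, h2, h3, ← Finset.prod_mul_distrib, ← Finset.prod_mul_distrib, DFun]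
  apply Finset.prod_dvd_prod_of_dvd
  intro p hps
  rw [← pow_add, ← pow_add]
  exact pow_dvd_pow p (key_ineq (Finset.mem_filter.mp hps).2 k l)
end

section
/- Let p > 2 be a prime and let λ be a unit of the ring ℤ_p of p-adic integers. Then the subgroup of ℤ_p^* generated by λ (the set of integer powers λ^m, m ∈ ℤ) is dense in ℤ_p^* (for the topology induced from ℤ_p) if and only if the image of λ under the reduction map ℤ_p → ℤ/pℤ has multiplicative order p−1 and λ^{p−1} − 1 has p-adic valuation exactly 1. -/
/-!
If the powers of `λ` are dense, they meet every residue class of units mod `p`, so `λ mod p`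
generates `(ℤ/p)ˣ`; and a power `λ^m ≡ 1 + p (mod p²)` has `m` divisible by `p - 1`, so
`λ^(p-1) ≢ 1 (mod p²)`. Conversely, write `λ^(p-1) = 1 + p u` with `p ∤ u`. For odd `p` the
binomial theorem gives `λ^((p-1) p^n) = 1 + p^(n+1) w` with `p ∤ w`, and multiplying an
approximation of a unit modulo `p^(n+1)` by a suitable power of this element fixes the next
`p`-adic digit.
-/

open PadicInt

theorem Units.dvd_zpow_sub_one {R : Type*} [CommRing R] {a : R} {u : Rˣ} (h : a ∣ (u : R) - 1)
    (k : ℤ) : a ∣ ((u ^ k : Rˣ) : R) - 1 := by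
  let f : Rˣ →* (R ⧸ Ideal.span {a})ˣ := Units.map (Ideal.Quotient.mk _).toMonoidHom
  have mem_ker : ∀ v : Rˣ, v ∈ f.ker ↔ a ∣ (v : R) - 1 := fun v => by
    rw [MonoidHom.mem_ker, Units.ext_iff, ← Ideal.mem_span_singleton, ← Ideal.Quotient.eq]
    rfl
  exact (mem_ker _).1 (f.ker.zpow_mem ((mem_ker u).2 h) k)

namespace PadicInt

variable {p : ℕ} [Fact p.Prime]

theorem mem_closure_iff_forall_exists_pow_dvd_sub {S : Set ℤ_[p]} {x : ℤ_[p]} :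
    x ∈ closure S ↔ ∀ n : ℕ, ∃ s ∈ S, (p : ℤ_[p]) ^ n ∣ s - x := by
  simp_rw [Metric.mem_closure_iff, dist_comm x, dist_eq_norm, ← Ideal.mem_span_singleton,
    ← norm_le_pow_iff_mem_span_pow]
  constructor
  · intro h n
    obtain ⟨s, hs, hlt⟩ := h _ (zpow_pos (Nat.cast_pos.2 (Fact.out : p.Prime).pos) (-n : ℤ))
    exact ⟨s, hs, hlt.le⟩
  · intro h ε hε
    obtain ⟨n, hn⟩ := exists_pow_neg_lt p hε
    obtain ⟨s, hs, hle⟩ := h n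
    exact ⟨s, hs, hle.trans_lt hn⟩

theorem toZMod_eq_toZMod_iff {x y : ℤ_[p]} : toZMod x = toZMod y ↔ (p : ℤ_[p]) ∣ x - y := by
  rw [← sub_eq_zero, ← map_sub, ← RingHom.mem_ker, ker_toZMod, maximalIdeal_eq_span_p,
    Ideal.mem_span_singleton]

theorem toZMod_eq_zero_iff {x : ℤ_[p]} : toZMod x = 0 ↔ (p : ℤ_[p]) ∣ x := by
  simpa using toZMod_eq_toZMod_iff (x := x) (y := 0)

theorem isUnit_iff_not_dvd {x : ℤ_[p]} : IsUnit x ↔ ¬ (p : ℤ_[p]) ∣ x := by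
  rw [← IsLocalRing.notMem_maximalIdeal, maximalIdeal_eq_span_p, Ideal.mem_span_singleton]

theorem valuation_eq_one_iff {x : ℤ_[p]} :
    x.valuation = 1 ↔ (p : ℤ_[p]) ∣ x ∧ ¬ (p : ℤ_[p]) ^ 2 ∣ x := by
  rcases eq_or_ne x 0 with rfl | hx
  · simp
  have h := mem_span_pow_iff_le_valuation x hx
  simp only [Ideal.mem_span_singleton] at h
  nth_rw 1 [← pow_one (p : ℤ_[p])]
  rw [h 1, h 2]
  omega

theorem exists_natCast_mul_add_dvd {v : ℤ_[p]} (hv : ¬ (p : ℤ_[p]) ∣ v) (t : ℤ_[p]) :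
    ∃ c : ℕ, (p : ℤ_[p]) ∣ c * v + t := by
  refine ⟨(-toZMod t / toZMod v).val, ?_⟩
  rw [← toZMod_eq_zero_iff] at hv ⊢
  simp [hv]

theorem exists_one_add_p_mul_pow_p_pow_eq (hp : 2 < p) {u : ℤ_[p]} (hu : ¬ (p : ℤ_[p]) ∣ u)
    (n : ℕ) : ∃ w : ℤ_[p], ¬ (p : ℤ_[p]) ∣ w ∧ (1 + p * u) ^ p ^ n = 1 + p ^ (n + 1) * w := by
  have hppp : (p : ℤ_[p]) * p * p ∣ (p : ℤ_[p]) ^ p := by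
    rw [← pow_two, ← pow_succ]
    exact pow_dvd_pow _ hp
  obtain ⟨y, hy⟩ := ZMod.exists_one_add_mul_pow_prime_pow_eq Fact.out dvd_rfl hppp u n
  refine ⟨u + p * y, fun h => hu ((dvd_add_left (dvd_mul_right _ _)).1 h), ?_⟩
  rw [hy, pow_succ]

noncomputable def unitsToZMod : ℤ_[p]ˣ →* (ZMod p)ˣ :=
  Units.map (toZMod : ℤ_[p] →+* ZMod p).toMonoidHom

theorem val_unitsToZMod (u : ℤ_[p]ˣ) : (unitsToZMod u : ZMod p) = toZMod (u : ℤ_[p]) := rfl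

theorem unitsToZMod_eq_iff {u v : ℤ_[p]ˣ} :
    unitsToZMod u = unitsToZMod v ↔ (p : ℤ_[p]) ∣ u - v := by
  rw [Units.ext_iff, val_unitsToZMod, val_unitsToZMod, toZMod_eq_toZMod_iff]

theorem unitsToZMod_surjective : Function.Surjective (unitsToZMod (p := p)) := by
  intro c
  have hx : IsUnit ((c : ZMod p).val : ℤ_[p]) := by
    rw [isUnit_iff_not_dvd, ← toZMod_eq_zero_iff, map_natCast, ZMod.natCast_zmod_val]
    exact c.ne_zero
  exact ⟨hx.unit, Units.ext (by simp [val_unitsToZMod])⟩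

theorem zpowers_unitsToZMod_eq_top_iff (lam : ℤ_[p]ˣ) :
    Subgroup.zpowers (unitsToZMod lam) = ⊤ ↔
      ∀ v : ℤ_[p]ˣ, ∃ m : ℤ, (p : ℤ_[p]) ∣ ((lam ^ m : ℤ_[p]ˣ) : ℤ_[p]) - v := by
  simp_rw [Subgroup.eq_top_iff', unitsToZMod_surjective.forall, Subgroup.mem_zpowers_iff,
    ← map_zpow, unitsToZMod_eq_iff]

theorem orderOf_toZMod_eq_iff (lam : ℤ_[p]ˣ) :
    orderOf (toZMod (lam : ℤ_[p])) = p - 1 ↔ Subgroup.zpowers (unitsToZMod lam) = ⊤ := by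
  rw [← val_unitsToZMod, orderOf_units, ← Subgroup.card_eq_iff_eq_top, Nat.card_zpowers,
    Nat.card_eq_fintype_card, ZMod.card_units]

theorem p_dvd_pow_p_sub_one_sub_one (lam : ℤ_[p]ˣ) :
    (p : ℤ_[p]) ∣ (lam : ℤ_[p]) ^ (p - 1) - 1 := by
  simpa using (unitsToZMod_eq_iff (u := lam ^ (p - 1)) (v := 1)).1
    (by rw [map_pow, ZMod.units_pow_card_sub_one_eq_one, map_one])

theorem not_p_sq_dvd_pow_p_sub_one_sub_one {lam : ℤ_[p]ˣ}
    (hgen : Subgroup.zpowers (unitsToZMod lam) = ⊤)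
    (hlift : ∃ m : ℤ, (p : ℤ_[p]) ^ 2 ∣ ((lam ^ m : ℤ_[p]ˣ) : ℤ_[p]) - (1 + p)) :
    ¬ (p : ℤ_[p]) ^ 2 ∣ (lam : ℤ_[p]) ^ (p - 1) - 1 := by
  intro hsq
  obtain ⟨m, hm⟩ := hlift
  have hm1 : unitsToZMod (lam ^ m) = unitsToZMod 1 := by
    rw [unitsToZMod_eq_iff, Units.val_one]
    convert dvd_add ((dvd_pow_self (p : ℤ_[p]) two_ne_zero).trans hm) (dvd_refl (p : ℤ_[p]))
      using 1
    ring
  have hord : orderOf (unitsToZMod lam) = p - 1 := by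
    rw [orderOf_eq_card_of_zpowers_eq_top hgen, Nat.card_eq_fintype_card, ZMod.card_units]
  obtain ⟨k, rfl⟩ : ((p - 1 : ℕ) : ℤ) ∣ m := by
    rw [← hord, orderOf_dvd_iff_zpow_eq_one, ← map_zpow, hm1, map_one]
  have hk := Units.dvd_zpow_sub_one (u := lam ^ (p - 1)) (by simpa using hsq) k
  rw [← zpow_natCast, ← zpow_mul] at hk
  have hp2 : (p : ℤ_[p]) ^ 2 ∣ (p : ℤ_[p]) ^ 1 := by simpa using dvd_sub hk hm
  exact absurd ((_root_.pow_dvd_pow_iff prime_p.ne_zero prime_p.not_isUnit).1 hp2) (by norm_num)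

theorem exists_mul_one_add_mul_pow_dvd_sub {y x w : ℤ_[p]} {n : ℕ} (hy : ¬ (p : ℤ_[p]) ∣ y)
    (hw : ¬ (p : ℤ_[p]) ∣ w) (h : (p : ℤ_[p]) ^ (n + 1) ∣ y - x) :
    ∃ c : ℕ, (p : ℤ_[p]) ^ (n + 2) ∣ y * (1 + p ^ (n + 1) * w) ^ c - x := by
  obtain ⟨t, ht⟩ := h
  obtain ⟨c, hc⟩ := exists_natCast_mul_add_dvd
    (fun hwy => (prime_p.dvd_or_dvd hwy).elim hw hy) t
  refine ⟨c, ?_⟩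
  have hsq := sq_dvd_add_pow_sub_sub ((p : ℤ_[p]) ^ (n + 1) * w) 1 c
  simp only [one_pow, one_mul] at hsq
  have hsplit : y * (1 + p ^ (n + 1) * w) ^ c - x =
      y * ((1 + p ^ (n + 1) * w) ^ c - p ^ (n + 1) * w * c - 1) +
        p ^ (n + 1) * (c * (w * y) + t) := by
    linear_combination ht
  rw [hsplit]
  refine dvd_add (dvd_mul_of_dvd_right (dvd_trans ?_ hsq) _) ?_
  · rw [mul_pow, ← pow_mul]
    exact (pow_dvd_pow _ (by omega)).trans (dvd_mul_right _ _)
  · rw [pow_succ]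
    exact mul_dvd_mul_left _ hc

theorem exists_zpow_dvd_sub (hp : 2 < p) {lam : ℤ_[p]ˣ}
    (hgen : Subgroup.zpowers (unitsToZMod lam) = ⊤)
    (hval : ¬ (p : ℤ_[p]) ^ 2 ∣ (lam : ℤ_[p]) ^ (p - 1) - 1) (v : ℤ_[p]ˣ) (n : ℕ) :
    ∃ m : ℤ, (p : ℤ_[p]) ^ (n + 1) ∣ ((lam ^ m : ℤ_[p]ˣ) : ℤ_[p]) - v := by
  obtain ⟨u, hu⟩ := p_dvd_pow_p_sub_one_sub_one lam
  have hu' : ¬ (p : ℤ_[p]) ∣ u := fun h => hval (by rw [hu, pow_two]; exact mul_dvd_mul_left _ h)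
  induction n with
  | zero => simpa using (zpowers_unitsToZMod_eq_top_iff lam).1 hgen v
  | succ n ih =>
    obtain ⟨m, hm⟩ := ih
    obtain ⟨w, hw, hpow⟩ := exists_one_add_p_mul_pow_p_pow_eq hp hu' n
    obtain ⟨c, hc⟩ :=
      exists_mul_one_add_mul_pow_dvd_sub (isUnit_iff_not_dvd.1 (Units.isUnit _)) hw hm
    refine ⟨m + ((p - 1) * p ^ n * c : ℕ), ?_⟩
    rwa [zpow_add, zpow_natCast, Units.val_mul, Units.val_pow_eq_pow_val, pow_mul, pow_mul,
      eq_add_of_sub_eq' hu, hpow]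

end PadicInt

/-- For an odd prime `p` and a unit `λ` of `ℤ_p`, the subgroup of `ℤ_p^*` generated by `λ`
(the integer powers of `λ`) is dense in `ℤ_p^*` (for the topology induced from `ℤ_p`,
i.e. every unit of `ℤ_p` is a limit of integer powers of `λ`) if and only if
the reduction of `λ` mod `p` has multiplicative order `p − 1` and
`λ^(p−1) − 1` has `p`-adic valuation exactly `1`. -/
theorem dense_powers_iff (p : ℕ) [Fact p.Prime] (hp : p > 2) (lam : ℤ_[p]ˣ) :
    (∀ x : ℤ_[p], IsUnit x →
        x ∈ closure (Set.range fun m : ℤ => ((lam ^ m : ℤ_[p]ˣ) : ℤ_[p]))) ↔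
    (orderOf (PadicInt.toZMod (lam : ℤ_[p])) = p - 1 ∧
      (((lam : ℤ_[p]) ^ (p - 1) - 1)).valuation = 1) := by
  simp only [mem_closure_iff_forall_exists_pow_dvd_sub, Set.exists_range_iff]
  rw [orderOf_toZMod_eq_iff, valuation_eq_one_iff,
    and_iff_right (p_dvd_pow_p_sub_one_sub_one lam)]
  constructor
  · intro hdense
    have hgen : Subgroup.zpowers (unitsToZMod lam) = ⊤ :=
      (zpowers_unitsToZMod_eq_top_iff lam).2 fun v => by simpa using hdense v v.isUnit 1
    have hunit : IsUnit (1 + (p : ℤ_[p])) :=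
      isUnit_iff_not_dvd.2 fun h => prime_p.not_dvd_one ((dvd_add_left dvd_rfl).1 h)
    exact ⟨hgen, not_p_sq_dvd_pow_p_sub_one_sub_one hgen (hdense _ hunit 2)⟩
  · rintro ⟨hgen, hval⟩ _ ⟨v, rfl⟩ n
    obtain ⟨m, hm⟩ := exists_zpow_dvd_sub hp hgen hval v n
    exact ⟨m, (pow_dvd_pow _ n.le_succ).trans hm⟩
end
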